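/- arXiv:2503.20917 — 5 statements merged into one kernel-verified Lean document; each statement's English description precedes it below -/
import Mathlib

section
/- Root distribution for a section in which every component has net material upward flow (the edge case h = 0, l = 1): if d_i > 0 for every i ∈ {1, …, c} and V > ∑_{i=1}^c d_i, then for each i ∈ {1, …, c} there exists exactly one γ in the open interval (α_{i−1}, α_i) (with the convention α_0 = 0) satisfying g(γ) = V, and the characteristic equation g(γ) = V has no real solution outside the union of these c intervals (in particular none with γ ≤ 0 and none with γ > α_c). -/
open Filter Topology Set

/-- The section function `g(γ) = ∑_{i=1}^c α_i d_i / (α_i − γ)`. -/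
noncomputable def secFun (c : ℕ) (α d : ℕ → ℝ) (γ : ℝ) : ℝ :=
  ∑ i ∈ Finset.Icc 1 c, α i * d i / (α i - γ)

private lemma div_lt_div_same_sign {a b1 b2 : ℝ} (ha : 0 < a) (hb : b2 < b1)
    (hs : 0 < b2 ∨ b1 < 0) : a / b1 < a / b2 := by
  rcases hs with h | h
  · exact div_lt_div_of_pos_left ha h hb
  · have := div_lt_div_of_pos_left ha (neg_pos.2 h) (neg_lt_neg hb)
    rw [div_neg, div_neg] at this
    linarith

private lemma alpha_pos {c : ℕ} {α : ℕ → ℝ} (hα0 : α 0 = 0)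
    (hmono : ∀ i ≤ c, ∀ j ≤ c, i < j → α i < α j)
    {j : ℕ} (hj : j ∈ Finset.Icc 1 c) : 0 < α j := by
  obtain ⟨hj1, hj2⟩ := Finset.mem_Icc.1 hj
  have := hmono 0 (Nat.zero_le c) j hj2 (by omega)
  linarith [hα0 ▸ this]

/-- For `j ∈ [1,c]`, `α j` lies outside the open interval `(α (i-1), α i)`. -/
private lemma alpha_side {c : ℕ} {α : ℕ → ℝ}
    (hmono : ∀ i ≤ c, ∀ j ≤ c, i < j → α i < α j)
    {i j : ℕ} (hi : i ∈ Finset.Icc 1 c) (hj : j ∈ Finset.Icc 1 c) :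
    α j ≤ α (i - 1) ∨ α i ≤ α j := by
  obtain ⟨hi1, hi2⟩ := Finset.mem_Icc.1 hi
  obtain ⟨hj1, hj2⟩ := Finset.mem_Icc.1 hj
  rcases lt_or_ge j i with h | h
  · left
    rcases eq_or_lt_of_le (by omega : j ≤ i - 1) with h' | h'
    · rw [h']
    · exact le_of_lt (hmono j (by omega) (i - 1) (by omega) h')
  · right
    rcases eq_or_lt_of_le h with h' | h'
    · rw [h']
    · exact le_of_lt (hmono i (by omega) j (by omega) h')

private lemma denom_ne {c : ℕ} {α : ℕ → ℝ}
    (hmono : ∀ i ≤ c, ∀ j ≤ c, i < j → α i < α j)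
    {i j : ℕ} (hi : i ∈ Finset.Icc 1 c) (hj : j ∈ Finset.Icc 1 c)
    {γ : ℝ} (hγ : γ ∈ Set.Ioo (α (i - 1)) (α i)) : α j - γ ≠ 0 := by
  rcases alpha_side hmono hi hj with h | h
  · exact ne_of_lt (by linarith [hγ.1])
  · exact ne_of_gt (by linarith [hγ.2])

private lemma secFun_contOn {c : ℕ} {α d : ℕ → ℝ} {s : Set ℝ}
    (hne : ∀ γ ∈ s, ∀ j ∈ Finset.Icc 1 c, α j - γ ≠ 0) :
    ContinuousOn (secFun c α d) s := by
  unfold secFun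
  apply continuousOn_finset_sum
  intro j hj
  exact ContinuousOn.div continuousOn_const (by fun_prop) (fun γ hγ => hne γ hγ j hj)

private lemma secFun_strictMonoOn {c : ℕ} (hc : 1 ≤ c) {α d : ℕ → ℝ}
    (hα0 : α 0 = 0)
    (hmono : ∀ i ≤ c, ∀ j ≤ c, i < j → α i < α j)
    (hd : ∀ i ∈ Finset.Icc 1 c, 0 < d i)
    {i : ℕ} (hi : i ∈ Finset.Icc 1 c) :
    StrictMonoOn (secFun c α d) (Set.Ioo (α (i - 1)) (α i)) := by
  intro x hx y hy hxy
  unfold secFun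
  apply Finset.sum_lt_sum_of_nonempty ⟨1, Finset.mem_Icc.2 ⟨le_refl 1, hc⟩⟩
  intro j hj
  have ha : 0 < α j * d j := mul_pos (alpha_pos hα0 hmono hj) (hd j hj)
  have hb : α j - y < α j - x := by linarith
  apply div_lt_div_same_sign ha hb
  rcases alpha_side hmono hi hj with h | h
  · right; linarith [hx.1]
  · left; linarith [hy.2]

private lemma secFun_zero {c : ℕ} {α : ℕ → ℝ} (d : ℕ → ℝ) (hα0 : α 0 = 0)
    (hmono : ∀ i ≤ c, ∀ j ≤ c, i < j → α i < α j) :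
    secFun c α d 0 = ∑ i ∈ Finset.Icc 1 c, d i := by
  unfold secFun
  apply Finset.sum_congr rfl
  intro j hj
  have h := alpha_pos hα0 hmono hj
  rw [sub_zero, mul_comm, mul_div_assoc, div_self h.ne', mul_one]

private lemma secFun_tendsto_atTop {c : ℕ} {α d : ℕ → ℝ}
    (hα0 : α 0 = 0)
    (hmono : ∀ i ≤ c, ∀ j ≤ c, i < j → α i < α j)
    (hd : ∀ i ∈ Finset.Icc 1 c, 0 < d i)
    {i : ℕ} (hi : i ∈ Finset.Icc 1 c) :
    Tendsto (secFun c α d) (𝓝[<] (α i)) atTop := by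
  have hpos : 0 < α i * d i := mul_pos (alpha_pos hα0 hmono hi) (hd i hi)
  have hmain : Tendsto (fun γ => α i * d i / (α i - γ)) (𝓝[<] (α i)) atTop := by
    have h1 : Tendsto (fun γ : ℝ => α i - γ) (𝓝[<] (α i)) (𝓝[>] 0) := by
      apply tendsto_nhdsWithin_of_tendsto_nhds_of_eventually_within
      · have h : Tendsto (fun γ : ℝ => α i - γ) (𝓝 (α i)) (𝓝 (α i - α i)) :=
          (continuous_const.sub continuous_id).tendsto _
        rw [sub_self] at h
        exact h.mono_left nhdsWithin_le_nhds
      · filter_upwards [self_mem_nhdsWithin] with γ hγ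
        exact sub_pos.2 (Set.mem_Iio.1 hγ)
    have h3 := h1.inv_tendsto_nhdsGT_zero.const_mul_atTop hpos
    simpa [div_eq_mul_inv] using h3
  have hsum : Tendsto (fun γ => ∑ j ∈ (Finset.Icc 1 c).erase i, α j * d j / (α j - γ))
      (𝓝[<] (α i)) (𝓝 (∑ j ∈ (Finset.Icc 1 c).erase i, α j * d j / (α j - α i))) := by
    apply tendsto_finset_sum
    intro j hj
    have hji : j ≠ i := (Finset.mem_erase.1 hj).1
    have hjc := (Finset.mem_erase.1 hj).2
    obtain ⟨hj1, hj2⟩ := Finset.mem_Icc.1 hjc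
    obtain ⟨hi1, hi2⟩ := Finset.mem_Icc.1 hi
    have hne : α j - α i ≠ 0 := by
      rcases lt_or_gt_of_ne hji with h | h
      · exact ne_of_lt (sub_neg.2 (hmono j (by omega) i (by omega) h))
      · exact ne_of_gt (sub_pos.2 (hmono i (by omega) j (by omega) h))
    exact (ContinuousAt.div continuousAt_const (by fun_prop) hne).tendsto.mono_left
      nhdsWithin_le_nhds
  have h := hmain.atTop_add hsum
  apply h.congr
  intro γ
  unfold secFun
  exact Finset.add_sum_erase (Finset.Icc 1 c) (fun j => α j * d j / (α j - γ)) hi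

private lemma secFun_tendsto_atBot {c : ℕ} {α d : ℕ → ℝ}
    (hα0 : α 0 = 0)
    (hmono : ∀ i ≤ c, ∀ j ≤ c, i < j → α i < α j)
    (hd : ∀ i ∈ Finset.Icc 1 c, 0 < d i)
    {k : ℕ} (hk : k ∈ Finset.Icc 1 c) :
    Tendsto (secFun c α d) (𝓝[>] (α k)) atBot := by
  have hpos : 0 < α k * d k := mul_pos (alpha_pos hα0 hmono hk) (hd k hk)
  have hmain : Tendsto (fun γ => α k * d k / (α k - γ)) (𝓝[>] (α k)) atBot := by
    have h1 : Tendsto (fun γ : ℝ => γ - α k) (𝓝[>] (α k)) (𝓝[>] 0) := by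
      apply tendsto_nhdsWithin_of_tendsto_nhds_of_eventually_within
      · have h : Tendsto (fun γ : ℝ => γ - α k) (𝓝 (α k)) (𝓝 (α k - α k)) :=
          (continuous_id.sub continuous_const).tendsto _
        rw [sub_self] at h
        exact h.mono_left nhdsWithin_le_nhds
      · filter_upwards [self_mem_nhdsWithin] with γ hγ
        exact sub_pos.2 (Set.mem_Ioi.1 hγ)
    have h2 : Tendsto (fun γ : ℝ => -(γ - α k)⁻¹) (𝓝[>] (α k)) atBot :=
      tendsto_neg_atTop_atBot.comp h1.inv_tendsto_nhdsGT_zero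
    have h3 := h2.const_mul_atBot hpos
    apply h3.congr
    intro γ
    rw [div_eq_mul_inv, show α k - γ = -(γ - α k) by ring, inv_neg]
  have hsum : Tendsto (fun γ => ∑ j ∈ (Finset.Icc 1 c).erase k, α j * d j / (α j - γ))
      (𝓝[>] (α k)) (𝓝 (∑ j ∈ (Finset.Icc 1 c).erase k, α j * d j / (α j - α k))) := by
    apply tendsto_finset_sum
    intro j hj
    have hji : j ≠ k := (Finset.mem_erase.1 hj).1
    have hjc := (Finset.mem_erase.1 hj).2
    obtain ⟨hj1, hj2⟩ := Finset.mem_Icc.1 hjc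
    obtain ⟨hk1, hk2⟩ := Finset.mem_Icc.1 hk
    have hne : α j - α k ≠ 0 := by
      rcases lt_or_gt_of_ne hji with h | h
      · exact ne_of_lt (sub_neg.2 (hmono j (by omega) k (by omega) h))
      · exact ne_of_gt (sub_pos.2 (hmono k (by omega) j (by omega) h))
    exact (ContinuousAt.div continuousAt_const (by fun_prop) hne).tendsto.mono_left
      nhdsWithin_le_nhds
  have h := hmain.atBot_add hsum
  apply h.congr
  intro γ
  unfold secFun
  exact Finset.add_sum_erase (Finset.Icc 1 c) (fun j => α j * d j / (α j - γ)) hk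

/-- if every component has net upward flow (`d_i > 0` for all `i`)
and `V > ∑ d_i`, then for each `i ∈ {1,…,c}` there is exactly one root of the
characteristic equation in `(α_{i−1}, α_i)` (with the convention `α_0 = 0`),
and there are no real roots outside the union of these `c` intervals. -/
theorem root_distribution_all_up
    (c : ℕ) (hc : 1 ≤ c) (α d : ℕ → ℝ)
    (hα0 : α 0 = 0)
    (hmono : ∀ i ≤ c, ∀ j ≤ c, i < j → α i < α j)
    (hd : ∀ i ∈ Finset.Icc 1 c, 0 < d i)
    (V : ℝ) (hV : V > ∑ i ∈ Finset.Icc 1 c, d i) :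
    (∀ i ∈ Finset.Icc 1 c,
      ∃! γ : ℝ, γ ∈ Set.Ioo (α (i - 1)) (α i) ∧ secFun c α d γ = V) ∧
    (∀ γ : ℝ, (∀ i ∈ Finset.Icc 1 c, γ ≠ α i) → secFun c α d γ = V →
      ∃ i ∈ Finset.Icc 1 c, γ ∈ Set.Ioo (α (i - 1)) (α i)) := by
  have hdsum : 0 < ∑ i ∈ Finset.Icc 1 c, d i :=
    Finset.sum_pos hd ⟨1, Finset.mem_Icc.2 ⟨le_refl 1, hc⟩⟩
  constructor
  · -- existence and uniqueness in each interval
    intro i hi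
    obtain ⟨hi1, hi2⟩ := Finset.mem_Icc.1 hi
    have hio : α (i - 1) < α i := hmono (i - 1) (by omega) i (by omega) (by omega)
    -- a point v near α i with large value
    have ev1 := (secFun_tendsto_atTop hα0 hmono hd hi).eventually_gt_atTop V
    have ev2 : ∀ᶠ γ in 𝓝[<] (α i), γ ∈ Set.Ioo (α (i - 1)) (α i) :=
      Filter.eventually_of_mem (Ioo_mem_nhdsLT_of_mem ⟨hio, le_rfl⟩) (fun x hx => hx)
    obtain ⟨v, hvV, hvI⟩ := (ev1.and ev2).exists
    have hexists : ∃ γ0, γ0 ∈ Set.Ioo (α (i - 1)) (α i) ∧ secFun c α d γ0 = V := by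
      rcases eq_or_lt_of_le hi1 with h1 | h1
      · -- i = 1 : use continuity from 0
        have hi10 : i - 1 = 0 := by omega
        have hα10 : α (i - 1) = 0 := by rw [hi10, hα0]
        have h0v : (0 : ℝ) ≤ v := le_of_lt (hα10 ▸ hvI.1)
        have hcont : ContinuousOn (secFun c α d) (Set.Icc 0 v) := by
          apply secFun_contOn
          intro γ hγ j hj
          rcases alpha_side hmono hi hj with h | h
          · exfalso
            have := alpha_pos hα0 hmono hj
            rw [hα10] at h; linarith
          · exact ne_of_gt (by
              have := hγ.2
              have := hvI.2
              linarith)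
        have hVmem : V ∈ Set.Icc (secFun c α d 0) (secFun c α d v) :=
          ⟨by rw [secFun_zero d hα0 hmono]; exact le_of_lt hV, le_of_lt hvV⟩
        obtain ⟨γ0, hγ0I, hγ0V⟩ := intermediate_value_Icc h0v hcont hVmem
        have hγ0ne : γ0 ≠ 0 := by
          intro h
          rw [h, secFun_zero d hα0 hmono] at hγ0V
          linarith
        exact ⟨γ0, ⟨hα10 ▸ lt_of_le_of_ne hγ0I.1 (Ne.symm hγ0ne),
          lt_of_le_of_lt hγ0I.2 hvI.2⟩, hγ0V⟩
      · -- i ≥ 2 : use blow-down at α (i-1)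
        have hk : i - 1 ∈ Finset.Icc 1 c := Finset.mem_Icc.2 ⟨by omega, by omega⟩
        have ev3 := (secFun_tendsto_atBot hα0 hmono hd hk).eventually_lt_atBot V
        have ev4 : ∀ᶠ γ in 𝓝[>] (α (i - 1)), γ ∈ Set.Ioo (α (i - 1)) (α i) :=
          Filter.eventually_of_mem (Ioo_mem_nhdsGT_of_mem ⟨le_rfl, hio⟩) (fun x hx => hx)
        obtain ⟨u, huV, huI⟩ := (ev3.and ev4).exists
        have hmonoOn := secFun_strictMonoOn hc hα0 hmono hd hi
        have huv : u < v := by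
          rcases lt_trichotomy u v with h | h | h
          · exact h
          · exfalso; rw [h] at huV; linarith
          · exfalso; have := hmonoOn hvI huI h; linarith
        have hsub : Set.Icc u v ⊆ Set.Ioo (α (i - 1)) (α i) := fun γ hγ =>
          ⟨lt_of_lt_of_le huI.1 hγ.1, lt_of_le_of_lt hγ.2 hvI.2⟩
        have hcont : ContinuousOn (secFun c α d) (Set.Icc u v) :=
          secFun_contOn (fun γ hγ j hj => denom_ne hmono hi hj (hsub hγ))
        obtain ⟨γ0, hγ0I, hγ0V⟩ := intermediate_value_Icc (le_of_lt huv) hcont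
          ⟨le_of_lt huV, le_of_lt hvV⟩
        exact ⟨γ0, hsub hγ0I, hγ0V⟩
    obtain ⟨γ0, hγ0I, hγ0V⟩ := hexists
    exact ⟨γ0, ⟨hγ0I, hγ0V⟩, fun y hy =>
      (secFun_strictMonoOn hc hα0 hmono hd hi).injOn hy.1 hγ0I (by rw [hy.2, hγ0V])⟩
  · -- no roots outside the intervals
    intro γ hne hroot
    rcases le_or_gt γ 0 with h0 | h0
    · exfalso
      have hle : ∀ j ∈ Finset.Icc 1 c, α j * d j / (α j - γ) ≤ d j := by
        intro j hj
        have hαp := alpha_pos hα0 hmono hj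
        have h1 : α j * d j / (α j - γ) ≤ α j * d j / α j :=
          div_le_div_of_nonneg_left (le_of_lt (mul_pos hαp (hd j hj))) hαp (by linarith)
        have h2 : α j * d j / α j = d j := by
          rw [mul_comm, mul_div_assoc, div_self hαp.ne', mul_one]
        linarith
      have hsum := Finset.sum_le_sum hle
      unfold secFun at hroot
      linarith
    rcases lt_or_ge (α c) γ with hc' | hc'
    · exfalso
      have hle : ∀ j ∈ Finset.Icc 1 c, α j * d j / (α j - γ) ≤ 0 := by
        intro j hj
        obtain ⟨hj1, hj2⟩ := Finset.mem_Icc.1 hj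
        have hαc : α j ≤ α c := by
          rcases eq_or_lt_of_le hj2 with h | h
          · rw [h]
          · exact le_of_lt (hmono j (by omega) c le_rfl h)
        exact le_of_lt (div_neg_of_pos_of_neg
          (mul_pos (alpha_pos hα0 hmono hj) (hd j hj)) (by linarith))
      have hsum := Finset.sum_nonpos hle
      unfold secFun at hroot
      linarith
    · classical
      have hcIcc : c ∈ Finset.Icc 1 c := Finset.mem_Icc.2 ⟨hc, le_rfl⟩
      set s := (Finset.Icc 1 c).filter (fun j => γ < α j) with hs
      have hcs : c ∈ s :=
        Finset.mem_filter.2 ⟨hcIcc, lt_of_le_of_ne hc' (hne c hcIcc)⟩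
      have hsne : s.Nonempty := ⟨c, hcs⟩
      set i := s.min' hsne with hidef
      have his : i ∈ s := Finset.min'_mem _ _
      have hiIcc := (Finset.mem_filter.1 his).1
      have hγi : γ < α i := (Finset.mem_filter.1 his).2
      refine ⟨i, hiIcc, ?_, hγi⟩
      obtain ⟨hi1, hi2⟩ := Finset.mem_Icc.1 hiIcc
      rcases eq_or_lt_of_le hi1 with h1 | h1
      · have hi10 : i - 1 = 0 := by omega
        rw [hi10, hα0]; exact h0
      · have hk : i - 1 ∈ Finset.Icc 1 c := Finset.mem_Icc.2 ⟨by omega, by omega⟩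
        have hnotin : i - 1 ∉ s := fun h => by
          have := Finset.min'_le s _ h
          omega
        have hle2 : ¬ γ < α (i - 1) := fun h => hnotin (Finset.mem_filter.2 ⟨hk, h⟩)
        push_neg at hle2
        exact lt_of_le_of_ne hle2 (Ne.symm (hne (i - 1) hk))
end

section
/- Root distribution for a section in which every component has net material downward flow (the edge case l = c + 1, h = c): if d_i < 0 for every i ∈ {1, …, c} and V > 0, then for each i ∈ {1, …, c−1} there exists exactly one γ ∈ (α_i, α_{i+1}) with g(γ) = V, there exists exactly one γ ∈ (α_c, ∞) with g(γ) = V, and the characteristic equation g(γ) = V has no real solution with γ < α_1. -/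
open Filter Topology Set

/-- Derivative of the section function away from the poles. -/
lemma secFun_hasDerivAt (c : ℕ) (α d : ℕ → ℝ) (γ : ℝ)
    (hγ : ∀ i ∈ Finset.Icc 1 c, α i ≠ γ) :
    HasDerivAt (secFun c α d)
      (∑ i ∈ Finset.Icc 1 c, α i * d i / (α i - γ) ^ 2) γ := by
  have h : ∀ i ∈ Finset.Icc 1 c,
      HasDerivAt (fun x => α i * d i / (α i - x)) (α i * d i / (α i - γ) ^ 2) γ := by
    intro i hi
    have hne : α i - γ ≠ 0 := sub_ne_zero.mpr (hγ i hi)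
    have h1 : HasDerivAt (fun x : ℝ => α i - x) (-1) γ := by
      simpa using (hasDerivAt_id γ).const_sub (α i)
    have h2 := h1.inv hne
    have h3 := h2.const_mul (α i * d i)
    convert h3 using 1
    · rfl
    · rfl
    · funext x; simp [div_eq_mul_inv]
    · ring
  have := HasDerivAt.fun_sum h
  exact this

lemma secFun_continuousAt (c : ℕ) (α d : ℕ → ℝ) (γ : ℝ)
    (hγ : ∀ i ∈ Finset.Icc 1 c, α i ≠ γ) :
    ContinuousAt (secFun c α d) γ :=
  (secFun_hasDerivAt c α d γ hγ).continuousAt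

lemma secFun_strictAntiOn (c : ℕ) (hc : 1 ≤ c) (α d : ℕ → ℝ)
    (hd : ∀ i ∈ Finset.Icc 1 c, α i * d i < 0)
    {s : Set ℝ} (hconv : Convex ℝ s) (hopen : IsOpen s)
    (hs : ∀ γ ∈ s, ∀ i ∈ Finset.Icc 1 c, α i ≠ γ) :
    StrictAntiOn (secFun c α d) s := by
  apply strictAntiOn_of_deriv_neg hconv
  · intro x hx
    exact (secFun_continuousAt c α d x (hs x hx)).continuousWithinAt
  · intro x hx
    rw [hopen.interior_eq] at hx
    rw [(secFun_hasDerivAt c α d x (hs x hx)).deriv]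
    apply Finset.sum_neg
    · intro i hi
      have h1 : α i - x ≠ 0 := sub_ne_zero.mpr (hs x hx i hi)
      exact div_neg_of_neg_of_pos (hd i hi) (pow_two_pos_of_ne_zero h1)
    · exact ⟨1, Finset.mem_Icc.mpr ⟨le_refl 1, hc⟩⟩

/-- The nonsingular part of `secFun` (all terms except `k`) is continuous at `α k`. -/
lemma secFun_rest_tendsto (c : ℕ) (α d : ℕ → ℝ) (k : ℕ)
    (hne : ∀ i ∈ Finset.Icc 1 c, i ≠ k → α i ≠ α k) (l : Filter ℝ)
    (hl : l ≤ 𝓝 (α k)) :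
    Tendsto (fun γ => ∑ i ∈ (Finset.Icc 1 c).erase k, α i * d i / (α i - γ)) l
      (𝓝 (∑ i ∈ (Finset.Icc 1 c).erase k, α i * d i / (α i - α k))) := by
  have : Tendsto (fun γ => ∑ i ∈ (Finset.Icc 1 c).erase k, α i * d i / (α i - γ))
      (𝓝 (α k)) (𝓝 (∑ i ∈ (Finset.Icc 1 c).erase k, α i * d i / (α i - α k))) := by
    apply tendsto_finset_sum
    intro i hi
    rw [Finset.mem_erase] at hi
    exact ContinuousAt.div continuousAt_const
      ((continuous_const.sub continuous_id).continuousAt)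
      (sub_ne_zero.mpr (hne i hi.2 hi.1))
  exact this.mono_left hl

lemma tendsto_sub_inv_pole_right (a : ℝ) :
    Tendsto (fun γ : ℝ => (a - γ)⁻¹) (𝓝[>] a) atBot := by
  have h1 : Tendsto (fun γ : ℝ => γ - a) (𝓝[>] a) (𝓝[>] 0) := by
    rw [tendsto_nhdsWithin_iff]
    constructor
    · have h0 : Tendsto (fun γ : ℝ => γ - a) (𝓝 a) (𝓝 (a - a)) :=
        ((continuous_id.sub continuous_const).tendsto a)
      rw [sub_self] at h0
      exact h0.mono_left nhdsWithin_le_nhds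
    · filter_upwards [self_mem_nhdsWithin] with x hx
      simpa [Set.mem_Ioi, sub_pos] using hx
  have h2 : Tendsto (fun γ : ℝ => (γ - a)⁻¹) (𝓝[>] a) atTop :=
    tendsto_inv_nhdsGT_zero.comp h1
  have h3 := tendsto_neg_atTop_atBot.comp h2
  refine h3.congr fun x => ?_
  simp [neg_inv, neg_sub]

lemma tendsto_sub_inv_pole_left (a : ℝ) :
    Tendsto (fun γ : ℝ => (a - γ)⁻¹) (𝓝[<] a) atTop := by
  have h1 : Tendsto (fun γ : ℝ => a - γ) (𝓝[<] a) (𝓝[>] 0) := by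
    rw [tendsto_nhdsWithin_iff]
    constructor
    · have h0 : Tendsto (fun γ : ℝ => a - γ) (𝓝 a) (𝓝 (a - a)) :=
        ((continuous_const.sub continuous_id).tendsto a)
      rw [sub_self] at h0
      exact h0.mono_left nhdsWithin_le_nhds
    · filter_upwards [self_mem_nhdsWithin] with x hx
      simpa [Set.mem_Iio, sub_pos] using hx
  exact tendsto_inv_nhdsGT_zero.comp h1

/-- Near a pole from the right, `secFun → +∞`. -/
lemma secFun_tendsto_pole_right (c : ℕ) (α d : ℕ → ℝ) (k : ℕ)
    (hk : k ∈ Finset.Icc 1 c)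
    (hne : ∀ i ∈ Finset.Icc 1 c, i ≠ k → α i ≠ α k)
    (hneg : α k * d k < 0) :
    Tendsto (secFun c α d) (𝓝[>] (α k)) atTop := by
  have hterm : Tendsto (fun γ => α k * d k / (α k - γ)) (𝓝[>] (α k)) atTop := by
    have := (tendsto_sub_inv_pole_right (α k)).const_mul_atBot_of_neg hneg
    simpa [div_eq_mul_inv] using this
  have hrest := secFun_rest_tendsto c α d k hne (𝓝[>] (α k)) nhdsWithin_le_nhds
  set C := ∑ i ∈ (Finset.Icc 1 c).erase k, α i * d i / (α i - α k) with hC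
  have hsum : Tendsto (fun γ => α k * d k / (α k - γ) +
      ∑ i ∈ (Finset.Icc 1 c).erase k, α i * d i / (α i - γ)) (𝓝[>] (α k)) atTop := by
    apply tendsto_atTop_add_right_of_le' _ (C - 1) hterm
    filter_upwards [hrest.eventually (eventually_ge_nhds (by linarith : C - 1 < C))] with x hx
    exact hx
  refine hsum.congr fun γ => ?_
  exact Finset.add_sum_erase _ (fun i => α i * d i / (α i - γ)) hk

/-- Near a pole from the left, `secFun → −∞`. -/
lemma secFun_tendsto_pole_left (c : ℕ) (α d : ℕ → ℝ) (k : ℕ)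
    (hk : k ∈ Finset.Icc 1 c)
    (hne : ∀ i ∈ Finset.Icc 1 c, i ≠ k → α i ≠ α k)
    (hneg : α k * d k < 0) :
    Tendsto (secFun c α d) (𝓝[<] (α k)) atBot := by
  have hterm : Tendsto (fun γ => α k * d k / (α k - γ)) (𝓝[<] (α k)) atBot := by
    have := (tendsto_sub_inv_pole_left (α k)).const_mul_atTop_of_neg hneg
    simpa [div_eq_mul_inv] using this
  have hrest := secFun_rest_tendsto c α d k hne (𝓝[<] (α k)) nhdsWithin_le_nhds
  set C := ∑ i ∈ (Finset.Icc 1 c).erase k, α i * d i / (α i - α k) with hC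
  have hsum : Tendsto (fun γ => α k * d k / (α k - γ) +
      ∑ i ∈ (Finset.Icc 1 c).erase k, α i * d i / (α i - γ)) (𝓝[<] (α k)) atBot := by
    apply tendsto_atBot_add_right_of_ge' _ (C + 1) hterm
    filter_upwards [hrest.eventually (eventually_le_nhds (by linarith : C < C + 1))] with x hx
    exact hx
  refine hsum.congr fun γ => ?_
  exact Finset.add_sum_erase _ (fun i => α i * d i / (α i - γ)) hk

/-- As `γ → ∞`, `secFun → 0`. -/
lemma secFun_tendsto_atTop_s6 (c : ℕ) (α d : ℕ → ℝ) :
    Tendsto (secFun c α d) atTop (𝓝 0) := by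
  have h : ∀ i ∈ Finset.Icc 1 c,
      Tendsto (fun γ : ℝ => α i * d i / (α i - γ)) atTop (𝓝 0) := by
    intro i _
    have h1 : Tendsto (fun γ : ℝ => γ - α i) atTop atTop :=
      tendsto_atTop_add_const_right _ _ tendsto_id
    have h2 : Tendsto (fun γ : ℝ => (γ - α i)⁻¹) atTop (𝓝 0) := h1.inv_tendsto_atTop
    have h3 := (h2.const_mul (α i * d i)).neg
    rw [mul_zero, neg_zero] at h3
    refine h3.congr fun x => ?_
    rw [div_eq_mul_inv, show (α i - x) = -(x - α i) by ring, inv_neg, mul_neg]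
  have := tendsto_finset_sum (Finset.Icc 1 c) h
  rw [Finset.sum_const_zero] at this
  exact this

/-- Unique root for a continuous strictly antitone function on an ord-connected set. -/
lemma existsUnique_root_of_strictAntiOn {s : Set ℝ} (hs : s.OrdConnected)
    (f : ℝ → ℝ) (hanti : StrictAntiOn f s)
    (hcont : ∀ γ ∈ s, ContinuousAt f γ) {V x y : ℝ}
    (hx : x ∈ s) (hy : y ∈ s) (hfx : V < f x) (hfy : f y < V) :
    ∃! γ : ℝ, γ ∈ s ∧ f γ = V := by
  have hxy : x < y := by
    rcases lt_trichotomy x y with h | h | h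
    · exact h
    · exfalso; rw [h] at hfx; linarith
    · exfalso; have := hanti hy hx h; linarith
  have hsub : Set.Icc x y ⊆ s := hs.out hx hy
  have hcont' : ContinuousOn f (Set.Icc x y) := fun z hz =>
    (hcont z (hsub hz)).continuousWithinAt
  have hmem : V ∈ Set.Icc (f y) (f x) := ⟨le_of_lt hfy, le_of_lt hfx⟩
  obtain ⟨γ, hγ, hγV⟩ := intermediate_value_Icc' hxy.le hcont' hmem
  refine ⟨γ, ⟨hsub hγ, hγV⟩, ?_⟩
  rintro z ⟨hz, hzV⟩
  by_contra hne
  rcases lt_or_gt_of_ne hne with h | h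
  · have := hanti hz (hsub hγ) h; rw [hzV, hγV] at this; exact lt_irrefl _ this
  · have := hanti (hsub hγ) hz h; rw [hzV, hγV] at this; exact lt_irrefl _ this

/-- if every component has net downward flow (`d_i < 0` for all `i`)
and `V > 0`, then the characteristic equation `g(γ) = V` has exactly one root in
each interval `(α_i, α_{i+1})` for `i = 1,…,c−1`, exactly one root in
`(α_c, ∞)`, and no root with `γ < α_1`. -/
theorem root_distribution_all_down
    (c : ℕ) (hc : 1 ≤ c) (α d : ℕ → ℝ)
    (hpos : ∀ i ∈ Finset.Icc 1 c, 0 < α i)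
    (hmono : ∀ i ∈ Finset.Icc 1 c, ∀ j ∈ Finset.Icc 1 c, i < j → α i < α j)
    (hd : ∀ i ∈ Finset.Icc 1 c, d i < 0)
    (V : ℝ) (hV : 0 < V) :
    (∀ i ∈ Finset.Icc 1 (c - 1),
      ∃! γ : ℝ, γ ∈ Set.Ioo (α i) (α (i + 1)) ∧ secFun c α d γ = V) ∧
    (∃! γ : ℝ, γ ∈ Set.Ioi (α c) ∧ secFun c α d γ = V) ∧
    (∀ γ : ℝ, γ < α 1 → secFun c α d γ ≠ V) := by
  have hneg : ∀ i ∈ Finset.Icc 1 c, α i * d i < 0 := fun i hi =>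
    mul_neg_of_pos_of_neg (hpos i hi) (hd i hi)
  have hmono' : ∀ i ∈ Finset.Icc 1 c, ∀ j ∈ Finset.Icc 1 c, i ≤ j → α i ≤ α j := by
    intro i hi j hj hij
    rcases eq_or_lt_of_le hij with h | h
    · rw [h]
    · exact (hmono i hi j hj h).le
  have hne_of_mem : ∀ k ∈ Finset.Icc 1 c, ∀ i ∈ Finset.Icc 1 c, i ≠ k → α i ≠ α k := by
    intro k hk i hi hik
    rcases lt_or_gt_of_ne hik with h | h
    · exact ne_of_lt (hmono i hi k hk h)
    · exact ne_of_gt (hmono k hk i hi h)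
  refine ⟨?_, ?_, ?_⟩
  · -- roots in (α k, α (k+1))
    intro k hk
    rw [Finset.mem_Icc] at hk
    have hk1 : k ∈ Finset.Icc 1 c := Finset.mem_Icc.mpr ⟨hk.1, by omega⟩
    have hk2 : k + 1 ∈ Finset.Icc 1 c := Finset.mem_Icc.mpr ⟨by omega, by omega⟩
    have hab : α k < α (k + 1) := hmono k hk1 (k + 1) hk2 (by omega)
    have hsep : ∀ γ ∈ Set.Ioo (α k) (α (k + 1)), ∀ i ∈ Finset.Icc 1 c, α i ≠ γ := by
      intro γ hγ i hi
      rw [Finset.mem_Icc] at hi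
      rcases le_or_gt i k with h | h
      · have : α i ≤ α k := hmono' i (Finset.mem_Icc.mpr ⟨hi.1, by omega⟩) k hk1 h
        exact ne_of_lt (lt_of_le_of_lt this hγ.1)
      · have : α (k + 1) ≤ α i :=
          hmono' (k + 1) hk2 i (Finset.mem_Icc.mpr ⟨by omega, hi.2⟩) (by omega)
        exact ne_of_gt (lt_of_lt_of_le hγ.2 this)
    have hanti := secFun_strictAntiOn c hc α d hneg (convex_Ioo _ _) isOpen_Ioo hsep
    -- point with value > V near the left end
    have htop := secFun_tendsto_pole_right c α d k hk1 (hne_of_mem k hk1) (hneg k hk1)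
    have hmemI : Set.Ioo (α k) (α (k + 1)) ∈ 𝓝[>] (α k) :=
      Ioo_mem_nhdsGT_of_mem ⟨le_refl _, hab⟩
    have hx : ∃ x, x ∈ Set.Ioo (α k) (α (k + 1)) ∧ V < secFun c α d x := by
      have := (htop.eventually (eventually_gt_atTop V)).and (Filter.eventually_mem_set.mpr hmemI)
      obtain ⟨x, hx1, hx2⟩ := this.exists
      exact ⟨x, hx2, hx1⟩
    -- point with value < V near the right end
    have hbot := secFun_tendsto_pole_left c α d (k + 1) hk2 (hne_of_mem (k + 1) hk2)
      (hneg (k + 1) hk2)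
    have hmemI' : Set.Ioo (α k) (α (k + 1)) ∈ 𝓝[<] (α (k + 1)) :=
      Ioo_mem_nhdsLT_of_mem ⟨hab, le_refl _⟩
    have hy : ∃ y, y ∈ Set.Ioo (α k) (α (k + 1)) ∧ secFun c α d y < V := by
      have := (hbot.eventually (eventually_lt_atBot V)).and (Filter.eventually_mem_set.mpr hmemI')
      obtain ⟨y, hy1, hy2⟩ := this.exists
      exact ⟨y, hy2, hy1⟩
    obtain ⟨x, hxmem, hxV⟩ := hx
    obtain ⟨y, hymem, hyV⟩ := hy
    exact existsUnique_root_of_strictAntiOn Set.ordConnected_Ioo (secFun c α d) hanti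
      (fun γ hγ => secFun_continuousAt c α d γ (hsep γ hγ)) hxmem hymem hxV hyV
  · -- root in (α c, ∞)
    have hcmem : c ∈ Finset.Icc 1 c := Finset.mem_Icc.mpr ⟨hc, le_refl c⟩
    have hsep : ∀ γ ∈ Set.Ioi (α c), ∀ i ∈ Finset.Icc 1 c, α i ≠ γ := by
      intro γ hγ i hi
      have : α i ≤ α c := hmono' i hi c hcmem (Finset.mem_Icc.mp hi).2
      exact ne_of_lt (lt_of_le_of_lt this hγ)
    have hanti := secFun_strictAntiOn c hc α d hneg (convex_Ioi _) isOpen_Ioi hsep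
    have htop := secFun_tendsto_pole_right c α d c hcmem (hne_of_mem c hcmem) (hneg c hcmem)
    have hx : ∃ x, x ∈ Set.Ioi (α c) ∧ V < secFun c α d x := by
      have := (htop.eventually (eventually_gt_atTop V)).and
        (Filter.eventually_mem_set.mpr self_mem_nhdsWithin)
      obtain ⟨x, hx1, hx2⟩ := this.exists
      exact ⟨x, hx2, hx1⟩
    have hzero := secFun_tendsto_atTop_s6 c α d
    have hy : ∃ y, y ∈ Set.Ioi (α c) ∧ secFun c α d y < V := by
      have := (hzero.eventually_lt_const hV).and (eventually_gt_atTop (α c))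
      obtain ⟨y, hy1, hy2⟩ := this.exists
      exact ⟨y, hy2, hy1⟩
    obtain ⟨x, hxmem, hxV⟩ := hx
    obtain ⟨y, hymem, hyV⟩ := hy
    exact existsUnique_root_of_strictAntiOn Set.ordConnected_Ioi (secFun c α d) hanti
      (fun γ hγ => secFun_continuousAt c α d γ (hsep γ hγ)) hxmem hymem hxV hyV
  · -- no root below α 1
    intro γ hγ
    have h1 : (1 : ℕ) ∈ Finset.Icc 1 c := Finset.mem_Icc.mpr ⟨le_refl 1, hc⟩
    have hlt : secFun c α d γ < 0 := by
      rw [secFun]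
      apply Finset.sum_neg
      · intro i hi
        have hα1 : α 1 ≤ α i := hmono' 1 h1 i hi (Finset.mem_Icc.mp hi).1
        have hpos' : 0 < α i - γ := by linarith
        exact div_neg_of_neg_of_pos (hneg i hi) hpos'
      · exact ⟨1, h1⟩
    exact ne_of_lt (lt_trans hlt hV)
end

section
/- Strict convexity on the sign-change interval: let h ∈ {1, …, c−1} and suppose d_i ≤ 0 for all i ≤ h and d_i ≥ 0 for all i > h, with at least one d_i nonzero. Then the section function g is strictly convex on the open interval (α_h, α_{h+1}). -/
/-- if `d_i ≤ 0` for `i ≤ h` and `d_i ≥ 0` for `i > h`, with at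
least one `d_i` nonzero, then `g` is strictly convex on `(α_h, α_{h+1})`. -/
theorem secFun_strictConvexOn_sign_change_interval
    (c : ℕ) (hc : 2 ≤ c) (α d : ℕ → ℝ)
    (hpos : ∀ i ∈ Finset.Icc 1 c, 0 < α i)
    (hmono : ∀ i ∈ Finset.Icc 1 c, ∀ j ∈ Finset.Icc 1 c, i < j → α i < α j)
    (h : ℕ) (hh1 : 1 ≤ h) (hh2 : h ≤ c - 1)
    (hdneg : ∀ i ∈ Finset.Icc 1 h, d i ≤ 0)
    (hdpos : ∀ i ∈ Finset.Icc (h + 1) c, 0 ≤ d i)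
    (hdne : ∃ i ∈ Finset.Icc 1 c, d i ≠ 0) :
    StrictConvexOn ℝ (Set.Ioo (α h) (α (h + 1))) (secFun c α d) := by
  set D := Set.Ioo (α h) (α (h + 1)) with hDdef
  have hhc : h ∈ Finset.Icc 1 c := by simp only [Finset.mem_Icc]; omega
  have hh1c : h + 1 ∈ Finset.Icc 1 c := by simp only [Finset.mem_Icc]; omega
  have hle : ∀ i ∈ Finset.Icc 1 c, ∀ j ∈ Finset.Icc 1 c, i ≤ j → α i ≤ α j := by
    intro i hi j hj hij
    rcases eq_or_lt_of_le hij with rfl | hlt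
    · exact le_rfl
    · exact (hmono i hi j hj hlt).le
  -- sign of (α i - x) on D
  have hsign : ∀ i ∈ Finset.Icc 1 c, ∀ x ∈ D,
      (i ≤ h → α i - x < 0) ∧ (h < i → 0 < α i - x) := by
    intro i hi x hx
    constructor
    · intro hih
      have := hle i hi h hhc hih
      have := hx.1
      linarith
    · intro hih
      have := hle (h + 1) hh1c i hi hih
      have := hx.2
      linarith
  have hne : ∀ i ∈ Finset.Icc 1 c, ∀ x ∈ D, α i - x ≠ 0 := by
    intro i hi x hx
    rcases le_or_gt i h with hih | hih
    · exact ((hsign i hi x hx).1 hih).ne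
    · exact ((hsign i hi x hx).2 hih).ne'
  set g1 : ℝ → ℝ := fun x => ∑ i ∈ Finset.Icc 1 c, α i * d i * ((α i - x) ^ 2)⁻¹ with hg1
  set g2 : ℝ → ℝ := fun x => ∑ i ∈ Finset.Icc 1 c, 2 * (α i * d i) * ((α i - x) ^ 3)⁻¹ with hg2
  have hder1 : ∀ x ∈ D, HasDerivAt (secFun c α d) (g1 x) x := by
    intro x hx
    have hterm : ∀ i ∈ Finset.Icc 1 c,
        HasDerivAt (fun y => α i * d i / (α i - y)) (α i * d i * ((α i - x) ^ 2)⁻¹) x := by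
      intro i hi
      have h1 : HasDerivAt (fun y => α i - y) (-1) x := by
        simpa using (hasDerivAt_id x).const_sub (α i)
      have h2 := (h1.inv (hne i hi x hx)).const_mul (α i * d i)
      have hval : α i * d i * ((α i - x) ^ 2)⁻¹ = α i * d i * (- (-1) / (α i - x) ^ 2) := by
        ring
      rw [hval]
      simpa [div_eq_mul_inv] using h2
    have := HasDerivAt.fun_sum hterm
    exact this
  have hder2 : ∀ x ∈ D, HasDerivAt g1 (g2 x) x := by
    intro x hx
    have hterm : ∀ i ∈ Finset.Icc 1 c,
        HasDerivAt (fun y => α i * d i * ((α i - y) ^ 2)⁻¹) (2 * (α i * d i) * ((α i - x) ^ 3)⁻¹) x := by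
      intro i hi
      have h1 : HasDerivAt (fun y => α i - y) (-1) x := by
        simpa using (hasDerivAt_id x).const_sub (α i)
      have h2 : HasDerivAt (fun y => (α i - y) ^ 2) (2 * (α i - x) ^ 1 * (-1)) x := by
        simpa using h1.fun_pow 2
      have hne2 : (α i - x) ^ 2 ≠ 0 := pow_ne_zero 2 (hne i hi x hx)
      have h3 := (h2.inv hne2).const_mul (α i * d i)
      have hx0 := hne i hi x hx
      have hval : 2 * (α i * d i) * ((α i - x) ^ 3)⁻¹
          = α i * d i * (-(2 * (α i - x) ^ 1 * (-1)) / ((α i - x) ^ 2) ^ 2) := by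
        field_simp
      rw [hval]
      exact h3
    exact HasDerivAt.fun_sum hterm
  have hDopen : IsOpen D := isOpen_Ioo
  have hderiv_eq : Set.EqOn (deriv (secFun c α d)) g1 D := fun x hx => (hder1 x hx).deriv
  apply strictConvexOn_of_deriv2_pos (convex_Ioo _ _)
  · intro x hx
    exact (hder1 x hx).differentiableAt.continuousAt.continuousWithinAt
  · intro x hx
    rw [interior_Ioo] at hx
    have heq : deriv (secFun c α d) =ᶠ[nhds x] g1 :=
      (hDopen.eventually_mem hx).mono fun y hy => hderiv_eq hy
    have h2 : deriv^[2] (secFun c α d) x = g2 x := by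
      simp only [Function.iterate_succ, Function.iterate_zero, Function.comp, id]
      rw [heq.deriv_eq]
      exact (hder2 x hx).deriv
    rw [h2, hg2]
    obtain ⟨j, hj, hdj⟩ := hdne
    apply Finset.sum_pos'
    · intro i hi
      rcases le_or_gt i h with hih | hih
      · have hneg : α i - x < 0 := (hsign i hi x hx).1 hih
        have hcube : (α i - x) ^ 3 < 0 := Odd.pow_neg (by decide) hneg
        have hinv : ((α i - x) ^ 3)⁻¹ < 0 := inv_lt_zero.mpr hcube
        have hdi : d i ≤ 0 := hdneg i (by simp only [Finset.mem_Icc] at hi ⊢; omega)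
        have hai := hpos i hi
        have h1 : α i * d i ≤ 0 := mul_nonpos_of_nonneg_of_nonpos hai.le hdi
        nlinarith [mul_nonneg (by linarith : (0:ℝ) ≤ -(2 * (α i * d i)))
          (by linarith : (0:ℝ) ≤ -((α i - x) ^ 3)⁻¹)]
      · have hposx : 0 < α i - x := (hsign i hi x hx).2 hih
        have hcube : 0 < (α i - x) ^ 3 := by positivity
        have hinv : 0 < ((α i - x) ^ 3)⁻¹ := by positivity
        have hdi : 0 ≤ d i := hdpos i (by simp only [Finset.mem_Icc] at hi ⊢; omega)
        have hai := hpos i hi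
        nlinarith [mul_nonneg (mul_nonneg (by norm_num : (0:ℝ) ≤ 2)
          (mul_nonneg hai.le hdi)) hinv.le]
    · refine ⟨j, hj, ?_⟩
      rcases le_or_gt j h with hih | hih
      · have hneg : α j - x < 0 := (hsign j hj x hx).1 hih
        have hcube : (α j - x) ^ 3 < 0 := Odd.pow_neg (by decide) hneg
        have hinv : ((α j - x) ^ 3)⁻¹ < 0 := inv_lt_zero.mpr hcube
        have hdi : d j < 0 :=
          lt_of_le_of_ne (hdneg j (by simp only [Finset.mem_Icc] at hj ⊢; omega)) hdj
        have hai := hpos j hj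
        have h1 : α j * d j < 0 := mul_neg_of_pos_of_neg hai hdi
        nlinarith [mul_pos (by linarith : (0:ℝ) < -(2 * (α j * d j)))
          (by linarith : (0:ℝ) < -((α j - x) ^ 3)⁻¹)]
      · have hposx : 0 < α j - x := (hsign j hj x hx).2 hih
        have hinv : 0 < ((α j - x) ^ 3)⁻¹ := by positivity
        have hdi : 0 < d j :=
          lt_of_le_of_ne (hdpos j (by simp only [Finset.mem_Icc] at hj ⊢; omega)) (Ne.symm hdj)
        have hai := hpos j hj
        nlinarith [mul_pos (mul_pos (by norm_num : (0:ℝ) < 2)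
          (mul_pos hai hdi)) hinv]
end

section
/- Behavior of g on the sign-change interval: let h ∈ {1, …, c−1} and suppose d_i ≤ 0 for all i ≤ h, d_i ≥ 0 for all i > h, and d_h < 0 and d_{h+1} > 0. Then g(γ) > 0 for all γ ∈ (α_h, α_{h+1}), g(γ) → +∞ as γ → α_h⁺ and as γ → α_{h+1}⁻, and g attains its infimum over (α_h, α_{h+1}) at a unique point γ* of this interval. -/
open Filter Topology

lemma hasDerivAt_div_lin (a b x : ℝ) (hx : b - x ≠ 0) :
    HasDerivAt (fun γ : ℝ => a / (b - γ)) (a / (b - x) ^ 2) x := by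
  have h1 : HasDerivAt (fun γ : ℝ => b - γ) (-1) x := (hasDerivAt_id x).const_sub b
  have h2 : HasDerivAt (fun y => a * (b - y)⁻¹) (a * (- -1 / (b - x) ^ 2)) x := (h1.inv hx).const_mul a
  convert h2 using 1
  ring
  ring

lemma hasDerivAt_div_sq (a b x : ℝ) (hx : b - x ≠ 0) :
    HasDerivAt (fun γ : ℝ => a / (b - γ) ^ 2) (2 * a / (b - x) ^ 3) x := by
  have h1 : HasDerivAt (fun γ : ℝ => b - γ) (-1) x := (hasDerivAt_id x).const_sub b
  have hsq := h1.pow 2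
  have h2 : HasDerivAt (fun y => a * ((b - y) ^ 2)⁻¹)
      (a * (-(↑2 * (b - x) ^ (2 - 1) * -1) / ((b - x) ^ 2) ^ 2)) x :=
    (hsq.inv (pow_ne_zero 2 hx)).const_mul a
  convert h2 using 1
  norm_num
  field_simp
  field_simp
  ring

/-- on the sign-change interval `(α_h, α_{h+1})`, the section
function `g` is positive, blows up to `+∞` at both endpoints, and attains its
infimum over the interval at a unique point. -/
theorem secFun_behavior_sign_change_interval
    (c : ℕ) (hc : 2 ≤ c) (α d : ℕ → ℝ)
    (hpos : ∀ i ∈ Finset.Icc 1 c, 0 < α i)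
    (hmono : ∀ i ∈ Finset.Icc 1 c, ∀ j ∈ Finset.Icc 1 c, i < j → α i < α j)
    (h : ℕ) (hh1 : 1 ≤ h) (hh2 : h ≤ c - 1)
    (hdneg : ∀ i ∈ Finset.Icc 1 h, d i ≤ 0)
    (hdpos : ∀ i ∈ Finset.Icc (h + 1) c, 0 ≤ d i)
    (hdh : d h < 0) (hdh1 : 0 < d (h + 1)) :
    (∀ γ ∈ Set.Ioo (α h) (α (h + 1)), 0 < secFun c α d γ) ∧
    Tendsto (secFun c α d) (𝓝[>] (α h)) atTop ∧
    Tendsto (secFun c α d) (𝓝[<] (α (h + 1))) atTop ∧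
    (∃! γstar : ℝ, γstar ∈ Set.Ioo (α h) (α (h + 1)) ∧
      ∀ γ ∈ Set.Ioo (α h) (α (h + 1)), secFun c α d γstar ≤ secFun c α d γ) := by
  have hhc : h ∈ Finset.Icc 1 c := by simp only [Finset.mem_Icc]; omega
  have hh1c : h + 1 ∈ Finset.Icc 1 c := by simp only [Finset.mem_Icc]; omega
  have hAB : α h < α (h + 1) := hmono h hhc (h + 1) hh1c (by omega)
  -- sign of denominators on the interval
  have hsign : ∀ γ ∈ Set.Ioo (α h) (α (h + 1)), ∀ i ∈ Finset.Icc 1 c,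
      (i ≤ h → α i - γ < 0) ∧ (h < i → 0 < α i - γ) := by
    intro γ hγ i hi
    constructor
    · intro hih
      have hle : α i ≤ α h := by
        rcases eq_or_lt_of_le hih with rfl | hlt
        · exact le_rfl
        · exact (hmono i hi h hhc hlt).le
      linarith [hγ.1]
    · intro hhi
      have hle : α (h + 1) ≤ α i := by
        rcases eq_or_lt_of_le (Nat.succ_le_of_lt hhi) with heq | hlt
        · exact le_of_eq (congrArg α heq)
        · exact (hmono (h + 1) hh1c i hi hlt).le
      linarith [hγ.2]
  have hne : ∀ γ ∈ Set.Ioo (α h) (α (h + 1)), ∀ i ∈ Finset.Icc 1 c, α i - γ ≠ 0 := by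
    intro γ hγ i hi
    rcases le_or_gt i h with hih | hhi
    · exact ((hsign γ hγ i hi).1 hih).ne
    · exact ((hsign γ hγ i hi).2 hhi).ne'
  -- each term is nonnegative, term h is positive
  have hterm : ∀ γ ∈ Set.Ioo (α h) (α (h + 1)), ∀ i ∈ Finset.Icc 1 c,
      0 ≤ α i * d i / (α i - γ) := by
    intro γ hγ i hi
    rcases le_or_gt i h with hih | hhi
    · have hd : d i ≤ 0 := hdneg i (by simp only [Finset.mem_Icc] at hi ⊢; omega)
      have hnum : α i * d i ≤ 0 := mul_nonpos_of_nonneg_of_nonpos (hpos i hi).le hd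
      have hden := (hsign γ hγ i hi).1 hih
      exact div_nonneg_iff.mpr (Or.inr ⟨hnum, hden.le⟩)
    · have hd : 0 ≤ d i := hdpos i (by simp only [Finset.mem_Icc] at hi ⊢; omega)
      exact div_nonneg (mul_nonneg (hpos i hi).le hd) ((hsign γ hγ i hi).2 hhi).le
  have htermh : ∀ γ ∈ Set.Ioo (α h) (α (h + 1)), 0 < α h * d h / (α h - γ) := by
    intro γ hγ
    exact div_pos_of_neg_of_neg (mul_neg_of_pos_of_neg (hpos h hhc) hdh)
      ((hsign γ hγ h hhc).1 le_rfl)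
  have part1 : ∀ γ ∈ Set.Ioo (α h) (α (h + 1)), 0 < secFun c α d γ := by
    intro γ hγ
    unfold secFun
    exact Finset.sum_pos' (hterm γ hγ) ⟨h, hhc, htermh γ hγ⟩
  -- decomposition and continuity of the "rest"
  have hrestcont : ∀ k : ℕ, ∀ x : ℝ, (∀ i ∈ (Finset.Icc 1 c).erase k, α i - x ≠ 0) →
      ContinuousAt (fun γ => ∑ i ∈ (Finset.Icc 1 c).erase k, α i * d i / (α i - γ)) x := by
    intro k x hx
    exact tendsto_finset_sum _ fun i hi =>
      continuousAt_const.div ((continuous_const.sub continuous_id).continuousAt) (hx i hi)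
  have hdecomp : ∀ k ∈ Finset.Icc 1 c, ∀ γ : ℝ, secFun c α d γ =
      α k * d k / (α k - γ) + ∑ i ∈ (Finset.Icc 1 c).erase k, α i * d i / (α i - γ) := by
    intro k hk γ
    exact (Finset.add_sum_erase _ _ hk).symm
  have hαne : ∀ k ∈ Finset.Icc 1 c, ∀ i ∈ (Finset.Icc 1 c).erase k, α i - α k ≠ 0 := by
    intro k hk i hi
    rcases Finset.mem_erase.mp hi with ⟨hik, hi'⟩
    rcases lt_or_gt_of_ne hik with hlt | hgt
    · exact (sub_neg.mpr (hmono i hi' k hk hlt)).ne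
    · exact (sub_pos.mpr (hmono k hk i hi' hgt)).ne'
  -- blow-up at the left endpoint
  have part2 : Tendsto (secFun c α d) (𝓝[>] (α h)) atTop := by
    have h1 : Tendsto (fun γ => γ - α h) (𝓝[>] (α h)) (𝓝[>] 0) := by
      apply tendsto_nhdsWithin_of_tendsto_nhds_of_eventually_within
      · have hcont : Tendsto (fun γ : ℝ => γ - α h) (𝓝 (α h)) (𝓝 0) := by
          have := (continuous_id.sub (continuous_const (y := α h))).tendsto (α h)
          simpa [Pi.sub_def] using this
        exact hcont.mono_left nhdsWithin_le_nhds
      · filter_upwards [self_mem_nhdsWithin] with x hx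
        exact sub_pos.mpr (Set.mem_Ioi.mp hx)
    have hC : (0:ℝ) < -(α h * d h) := by nlinarith [hpos h hhc]
    have hmain : Tendsto (fun γ => α h * d h / (α h - γ)) (𝓝[>] (α h)) atTop := by
      have := (tendsto_inv_nhdsGT_zero.comp h1).const_mul_atTop hC
      apply this.congr
      intro γ
      show -(α h * d h) * (γ - α h)⁻¹ = α h * d h / (α h - γ)
      rw [← div_eq_mul_inv, ← neg_div_neg_eq, neg_neg, neg_sub]
    have hrest : Tendsto (fun γ => ∑ i ∈ (Finset.Icc 1 c).erase h, α i * d i / (α i - γ))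
        (𝓝[>] (α h)) (𝓝 (∑ i ∈ (Finset.Icc 1 c).erase h, α i * d i / (α i - α h))) :=
      ((hrestcont h (α h) (hαne h hhc)).tendsto).mono_left nhdsWithin_le_nhds
    exact (hmain.atTop_add hrest).congr fun γ => (hdecomp h hhc γ).symm
  -- blow-up at the right endpoint
  have part3 : Tendsto (secFun c α d) (𝓝[<] (α (h + 1))) atTop := by
    have h1 : Tendsto (fun γ => α (h + 1) - γ) (𝓝[<] (α (h + 1))) (𝓝[>] 0) := by
      apply tendsto_nhdsWithin_of_tendsto_nhds_of_eventually_within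
      · have hcont : Tendsto (fun γ : ℝ => α (h + 1) - γ) (𝓝 (α (h + 1))) (𝓝 0) := by
          have := ((continuous_const (y := α (h + 1))).sub continuous_id).tendsto (α (h + 1))
          simpa [Pi.sub_def] using this
        exact hcont.mono_left nhdsWithin_le_nhds
      · filter_upwards [self_mem_nhdsWithin] with x hx
        rw [Set.mem_Iio] at hx
        exact sub_pos.mpr hx
    have hC : (0:ℝ) < α (h + 1) * d (h + 1) := mul_pos (hpos _ hh1c) hdh1
    have hmain : Tendsto (fun γ => α (h + 1) * d (h + 1) / (α (h + 1) - γ))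
        (𝓝[<] (α (h + 1))) atTop := by
      have := (tendsto_inv_nhdsGT_zero.comp h1).const_mul_atTop hC
      apply this.congr
      intro γ
      exact (div_eq_mul_inv _ _).symm
    have hrest : Tendsto
        (fun γ => ∑ i ∈ (Finset.Icc 1 c).erase (h + 1), α i * d i / (α i - γ))
        (𝓝[<] (α (h + 1)))
        (𝓝 (∑ i ∈ (Finset.Icc 1 c).erase (h + 1), α i * d i / (α i - α (h + 1)))) :=
      ((hrestcont (h + 1) (α (h + 1)) (hαne (h + 1) hh1c)).tendsto).mono_left nhdsWithin_le_nhds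
    exact (hmain.atTop_add hrest).congr fun γ => (hdecomp (h + 1) hh1c γ).symm
  refine ⟨part1, part2, part3, ?_⟩
  -- derivatives
  have hderiv1 : ∀ x ∈ Set.Ioo (α h) (α (h + 1)), HasDerivAt (secFun c α d)
      (∑ i ∈ Finset.Icc 1 c, α i * d i / (α i - x) ^ 2) x := by
    intro x hx
    have := HasDerivAt.fun_sum (u := Finset.Icc 1 c)
      (A := fun i γ => α i * d i / (α i - γ))
      (A' := fun i => α i * d i / (α i - x) ^ 2)
      (fun i hi => hasDerivAt_div_lin (α i * d i) (α i) x (hne x hx i hi))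
    exact this
  have hderiv2 : ∀ x ∈ Set.Ioo (α h) (α (h + 1)), HasDerivAt
      (fun γ => ∑ i ∈ Finset.Icc 1 c, α i * d i / (α i - γ) ^ 2)
      (∑ i ∈ Finset.Icc 1 c, 2 * (α i * d i) / (α i - x) ^ 3) x := by
    intro x hx
    exact HasDerivAt.fun_sum
      (fun i hi => hasDerivAt_div_sq (α i * d i) (α i) x (hne x hx i hi))
  have hcontOn : ContinuousOn (secFun c α d) (Set.Ioo (α h) (α (h + 1))) :=
    fun x hx => ((hderiv1 x hx).continuousAt).continuousWithinAt
  have hd2 : ∀ x ∈ Set.Ioo (α h) (α (h + 1)), deriv^[2] (secFun c α d) x =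
      ∑ i ∈ Finset.Icc 1 c, 2 * (α i * d i) / (α i - x) ^ 3 := by
    intro x hx
    have hev : deriv (secFun c α d) =ᶠ[𝓝 x]
        (fun γ => ∑ i ∈ Finset.Icc 1 c, α i * d i / (α i - γ) ^ 2) := by
      filter_upwards [isOpen_Ioo.mem_nhds hx] with y hy using (hderiv1 y hy).deriv
    show deriv (deriv (secFun c α d)) x = _
    rw [Filter.EventuallyEq.deriv_eq hev, (hderiv2 x hx).deriv]
  have hg2pos : ∀ x ∈ Set.Ioo (α h) (α (h + 1)),
      0 < ∑ i ∈ Finset.Icc 1 c, 2 * (α i * d i) / (α i - x) ^ 3 := by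
    intro x hx
    apply Finset.sum_pos'
    · intro i hi
      rcases le_or_gt i h with hih | hhi
      · have hd : d i ≤ 0 := hdneg i (by simp only [Finset.mem_Icc] at hi ⊢; omega)
        have hnum : 2 * (α i * d i) ≤ 0 := by nlinarith [hpos i hi]
        have hden : (α i - x) ^ 3 < 0 := Odd.pow_neg (⟨1, by norm_num⟩ : Odd 3) ((hsign x hx i hi).1 hih)
        exact div_nonneg_iff.mpr (Or.inr ⟨hnum, hden.le⟩)
      · have hd : 0 ≤ d i := hdpos i (by simp only [Finset.mem_Icc] at hi ⊢; omega)
        have hden : 0 < (α i - x) ^ 3 := pow_pos ((hsign x hx i hi).2 hhi) 3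
        exact div_nonneg (by nlinarith [hpos i hi]) hden.le
    · refine ⟨h, hhc, ?_⟩
      have hnum : 2 * (α h * d h) < 0 := by nlinarith [hpos h hhc]
      have hden : (α h - x) ^ 3 < 0 := Odd.pow_neg (⟨1, by norm_num⟩ : Odd 3) ((hsign x hx h hhc).1 le_rfl)
      exact div_pos_of_neg_of_neg hnum hden
  have hconv : StrictConvexOn ℝ (Set.Ioo (α h) (α (h + 1))) (secFun c α d) := by
    apply strictConvexOn_of_deriv2_pos (convex_Ioo _ _) hcontOn
    intro x hx
    rw [interior_Ioo] at hx
    rw [hd2 x hx]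
    exact hg2pos x hx
  -- existence of a minimizer
  set γ0 : ℝ := (α h + α (h + 1)) / 2 with hγ0def
  have hγ0 : γ0 ∈ Set.Ioo (α h) (α (h + 1)) := ⟨by rw [hγ0def]; linarith, by rw [hγ0def]; linarith⟩
  set M : ℝ := secFun c α d γ0 with hMdef
  have e1 : ∀ᶠ γ in 𝓝[>] (α h), M < secFun c α d γ := part2.eventually (eventually_gt_atTop M)
  have e2 : ∀ᶠ γ in 𝓝[<] (α (h + 1)), M < secFun c α d γ :=
    part3.eventually (eventually_gt_atTop M)
  obtain ⟨t, ht, hIt⟩ := mem_nhdsGT_iff_exists_Ioo_subset.mp e1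
  obtain ⟨u, hu, hIu⟩ := mem_nhdsLT_iff_exists_Ioo_subset.mp e2
  rw [Set.mem_Ioi] at ht
  rw [Set.mem_Iio] at hu
  set x1 : ℝ := min ((α h + t) / 2) γ0 with hx1def
  set x2 : ℝ := max ((u + α (h + 1)) / 2) γ0 with hx2def
  have hx1A : α h < x1 := lt_min (by linarith) hγ0.1
  have hx1γ0 : x1 ≤ γ0 := min_le_right _ _
  have hγ0x2 : γ0 ≤ x2 := le_max_right _ _
  have hx2B : x2 < α (h + 1) := max_lt (by linarith) hγ0.2
  have hsub : Set.Icc x1 x2 ⊆ Set.Ioo (α h) (α (h + 1)) :=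
    fun y hy => ⟨lt_of_lt_of_le hx1A hy.1, lt_of_le_of_lt hy.2 hx2B⟩
  obtain ⟨ξ, hξmem, hξmin⟩ := isCompact_Icc.exists_isMinOn ⟨γ0, hx1γ0, hγ0x2⟩
    (hcontOn.mono hsub)
  have hξM : secFun c α d ξ ≤ M := hξmin ⟨hx1γ0, hγ0x2⟩
  have hminall : ∀ γ ∈ Set.Ioo (α h) (α (h + 1)), secFun c α d ξ ≤ secFun c α d γ := by
    intro γ hγ
    by_cases hcase : γ ∈ Set.Icc x1 x2
    · exact hξmin hcase
    · rcases lt_or_ge γ x1 with hlt | hge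
      · have hγt : γ < t := lt_of_lt_of_le hlt (le_trans (min_le_left _ _) (by linarith))
        have : M < secFun c α d γ := hIt ⟨hγ.1, hγt⟩
        linarith
      · have hgt : x2 < γ := by
          rcases lt_or_ge x2 γ with h' | h'
          · exact h'
          · exact absurd ⟨hge, h'⟩ hcase
        have hγu : u < γ := lt_of_le_of_lt (le_trans (by linarith) (le_max_left _ _ :
            (u + α (h + 1)) / 2 ≤ x2)) hgt
        have : M < secFun c α d γ := hIu ⟨hγu, hγ.2⟩
        linarith
  refine ⟨ξ, ⟨hsub hξmem, hminall⟩, ?_⟩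
  rintro ζ ⟨hζmem, hζmin⟩
  by_contra hnee
  have hv1 : secFun c α d ξ ≤ secFun c α d ζ := hminall ζ hζmem
  have hv2 : secFun c α d ζ ≤ secFun c α d ξ := hζmin ξ (hsub hξmem)
  have hveq : secFun c α d ζ = secFun c α d ξ := le_antisymm hv2 hv1
  have hmid := hconv.2 hζmem (hsub hξmem) hnee (by norm_num : (0:ℝ) < 1/2)
    (by norm_num : (0:ℝ) < 1/2) (by norm_num)
  have hmemmid : (1/2 : ℝ) • ζ + (1/2 : ℝ) • ξ ∈ Set.Ioo (α h) (α (h + 1)) :=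
    (convex_Ioo _ _) hζmem (hsub hξmem) (by norm_num) (by norm_num) (by norm_num)
  have := hζmin _ hmemmid
  rw [hveq] at hmid
  simp only [smul_eq_mul] at hmid this
  linarith
end

section
/- Root distribution of the feed equation for a saturated liquid feed: let 0 < α_1 < ⋯ < α_c and f_m > 0 for every m ∈ {1, …, c}. Then the equation ∑_{m=1}^c α_m f_m/(α_m − ρ) = 0 has exactly c − 1 real solutions ρ (with ρ ∉ {α_1, …, α_c}), namely exactly one in each open interval (α_{m−1}, α_m) for m = 2, …, c, and it has no solution with ρ < α_1 or ρ > α_c. -/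
private lemma prod_neg_sign (T : Finset ℕ) (x : ℕ → ℝ) (h : ∀ j ∈ T, x j < 0) :
    0 < (-1 : ℝ) ^ T.card * ∏ j ∈ T, x j := by
  induction T using Finset.cons_induction with
  | empty => simp
  | cons a T ha ih =>
    rw [Finset.prod_cons, Finset.card_cons, pow_succ]
    have h1 := ih (fun j hj => h j (Finset.mem_cons.2 (Or.inr hj)))
    have h2 := h a (Finset.mem_cons_self a T)
    nlinarith

/-- for a saturated liquid feed with component flows `f_m > 0`,
the feed equation `∑_m α_m f_m/(α_m − ρ) = 0` has exactly one root in each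
interval `(α_{m−1}, α_m)` for `m = 2,…,c`, and every root (off the poles) lies
in one of these intervals; in particular there is no root below `α_1` or above
`α_c`. -/
theorem feed_root_distribution_saturated_liquid
    (c : ℕ) (hc : 1 ≤ c) (α f : ℕ → ℝ)
    (hα : ∀ m ∈ Finset.Icc 1 c, 0 < α m)
    (hmono : ∀ i ∈ Finset.Icc 1 c, ∀ j ∈ Finset.Icc 1 c, i < j → α i < α j)
    (hf : ∀ m ∈ Finset.Icc 1 c, 0 < f m) :
    (∀ m ∈ Finset.Icc 2 c,
      ∃! ρ : ℝ, ρ ∈ Set.Ioo (α (m - 1)) (α m) ∧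
        ∑ k ∈ Finset.Icc 1 c, α k * f k / (α k - ρ) = 0) ∧
    (∀ ρ : ℝ, (∀ m ∈ Finset.Icc 1 c, ρ ≠ α m) →
      (∑ k ∈ Finset.Icc 1 c, α k * f k / (α k - ρ) = 0) →
      ∃ m ∈ Finset.Icc 2 c, ρ ∈ Set.Ioo (α (m - 1)) (α m)) := by
  have hSne : (Finset.Icc 1 c).Nonempty := ⟨1, Finset.mem_Icc.2 ⟨le_refl 1, hc⟩⟩
  have hpos : ∀ k ∈ Finset.Icc 1 c, 0 < α k * f k := fun k hk => mul_pos (hα k hk) (hf k hk)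
  set P : ℝ → ℝ :=
    fun ρ => ∑ k ∈ Finset.Icc 1 c, α k * f k * ∏ j ∈ (Finset.Icc 1 c).erase k, (α j - ρ)
    with hPdef
  have hPcont : Continuous P := by
    apply continuous_finset_sum
    intro k _
    exact continuous_const.mul
      (continuous_finset_prod _ fun j _ => continuous_const.sub continuous_id)
  -- factorization off the poles
  have hfac : ∀ ρ : ℝ, (∀ j ∈ Finset.Icc 1 c, ρ ≠ α j) →
      P ρ = (∑ k ∈ Finset.Icc 1 c, α k * f k / (α k - ρ)) *
        ∏ j ∈ Finset.Icc 1 c, (α j - ρ) := by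
    intro ρ hρ
    simp only [hPdef]
    rw [Finset.sum_mul]
    refine Finset.sum_congr rfl fun k hk => ?_
    have hne : α k - ρ ≠ 0 := sub_ne_zero.2 (Ne.symm (hρ k hk))
    rw [← Finset.mul_prod_erase _ _ hk]
    field_simp
  have hroot_iff : ∀ ρ : ℝ, (∀ j ∈ Finset.Icc 1 c, ρ ≠ α j) →
      ((∑ k ∈ Finset.Icc 1 c, α k * f k / (α k - ρ)) = 0 ↔ P ρ = 0) := by
    intro ρ hρ
    have hQ : (∏ j ∈ Finset.Icc 1 c, (α j - ρ)) ≠ 0 :=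
      Finset.prod_ne_zero_iff.2 fun j hj => sub_ne_zero.2 (Ne.symm (hρ j hj))
    rw [hfac ρ hρ]
    constructor
    · intro h; rw [h, zero_mul]
    · intro h
      rcases mul_eq_zero.1 h with h' | h'
      · exact h'
      · exact absurd h' hQ
  -- value of P at the nodes
  have hPnode : ∀ m ∈ Finset.Icc 1 c,
      P (α m) = α m * f m * ∏ j ∈ (Finset.Icc 1 c).erase m, (α j - α m) := by
    intro m hm
    simp only [hPdef]
    apply Finset.sum_eq_single_of_mem m hm
    intro k hk hkm
    apply mul_eq_zero_of_right
    exact Finset.prod_eq_zero (Finset.mem_erase.2 ⟨Ne.symm hkm, hm⟩) (sub_self (α m))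
  -- sign of P at the nodes
  have hPsign : ∀ m ∈ Finset.Icc 1 c, 0 < (-1 : ℝ) ^ (m - 1) * P (α m) := by
    intro m hm
    obtain ⟨hm1, hmc⟩ := Finset.mem_Icc.1 hm
    have hsplit : (Finset.Icc 1 c).erase m = Finset.Icc 1 (m - 1) ∪ Finset.Icc (m + 1) c := by
      ext j
      simp only [Finset.mem_erase, Finset.mem_Icc, Finset.mem_union]
      omega
    have hdisj : Disjoint (Finset.Icc 1 (m - 1)) (Finset.Icc (m + 1) c) := by
      rw [Finset.disjoint_left]
      intro j hj1 hj2
      simp only [Finset.mem_Icc] at hj1 hj2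
      omega
    have hneg : ∀ j ∈ Finset.Icc 1 (m - 1), α j - α m < 0 := by
      intro j hj
      obtain ⟨hj1, hj2⟩ := Finset.mem_Icc.1 hj
      have : α j < α m :=
        hmono j (Finset.mem_Icc.2 ⟨hj1, by omega⟩) m hm (by omega)
      linarith
    have hposj : ∀ j ∈ Finset.Icc (m + 1) c, 0 < α j - α m := by
      intro j hj
      obtain ⟨hj1, hj2⟩ := Finset.mem_Icc.1 hj
      have : α m < α j :=
        hmono m hm j (Finset.mem_Icc.2 ⟨by omega, hj2⟩) (by omega)
      linarith
    have hcard : (Finset.Icc 1 (m - 1)).card = m - 1 := by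
      rw [Nat.card_Icc]; omega
    have h1 := prod_neg_sign _ _ hneg
    rw [hcard] at h1
    have h2 : 0 < ∏ j ∈ Finset.Icc (m + 1) c, (α j - α m) := Finset.prod_pos hposj
    have h3 := hpos m hm
    rw [hPnode m hm, hsplit, Finset.prod_union hdisj]
    nlinarith [mul_pos (mul_pos h3 h1) h2]
  -- strict monotonicity of the sum on each interval
  have hstrict : ∀ m, 2 ≤ m → m ≤ c → ∀ x y : ℝ, α (m - 1) < x → x < y → y < α m →
      (∑ k ∈ Finset.Icc 1 c, α k * f k / (α k - x)) <
        ∑ k ∈ Finset.Icc 1 c, α k * f k / (α k - y) := by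
    intro m hm2 hmc x y hx hxy hy
    apply Finset.sum_lt_sum_of_nonempty hSne
    intro k hk
    obtain ⟨hk1, hkc⟩ := Finset.mem_Icc.1 hk
    have ha : 0 < α k * f k := hpos k hk
    have huv : α k - y < α k - x := by linarith
    have hsame : 0 < (α k - x) * (α k - y) := by
      rcases le_or_gt k (m - 1) with h | h
      · have hαk : α k ≤ α (m - 1) := by
          rcases lt_or_eq_of_le h with hlt | heq
          · exact le_of_lt (hmono k hk (m - 1) (Finset.mem_Icc.2 ⟨by omega, by omega⟩) hlt)
          · rw [heq]
        exact mul_pos_of_neg_of_neg (by linarith) (by linarith)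
      · have hαk : α m ≤ α k := by
          rcases lt_or_eq_of_le (show m ≤ k by omega) with hlt | heq
          · exact le_of_lt (hmono m (Finset.mem_Icc.2 ⟨by omega, hmc⟩) k hk hlt)
          · rw [heq]
        exact mul_pos (by linarith) (by linarith)
    have hu0 : α k - x ≠ 0 := by
      intro h; rw [h, zero_mul] at hsame; exact lt_irrefl 0 hsame
    have hv0 : α k - y ≠ 0 := by
      intro h; rw [h, mul_zero] at hsame; exact lt_irrefl 0 hsame
    have hdiff : α k * f k / (α k - x) - α k * f k / (α k - y) =
        α k * f k * ((α k - y) - (α k - x)) / ((α k - x) * (α k - y)) := by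
      field_simp
    have hlt : α k * f k * ((α k - y) - (α k - x)) / ((α k - x) * (α k - y)) < 0 :=
      div_neg_of_neg_of_pos (by nlinarith) hsame
    linarith [hdiff ▸ hlt]
  refine ⟨?_, ?_⟩
  · -- part 1: exactly one root in each interval
    intro m hm
    obtain ⟨hm2, hmc⟩ := Finset.mem_Icc.1 hm
    have hm1S : m - 1 ∈ Finset.Icc 1 c := Finset.mem_Icc.2 ⟨by omega, by omega⟩
    have hmS : m ∈ Finset.Icc 1 c := Finset.mem_Icc.2 ⟨by omega, hmc⟩
    have hab : α (m - 1) < α m := hmono _ hm1S _ hmS (by omega)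
    have hsa := hPsign (m - 1) hm1S
    have hsb := hPsign m hmS
    have hexp : (-1 : ℝ) ^ (m - 1) = -((-1 : ℝ) ^ (m - 2)) := by
      have h : m - 1 = (m - 2) + 1 := by omega
      rw [h, pow_succ]; ring
    have h21 : m - 1 - 1 = m - 2 := by omega
    rw [h21] at hsa
    rw [hexp] at hsb
    set s : ℝ := (-1 : ℝ) ^ (m - 2) with hs
    have hs2 : s * s = 1 := by
      rw [hs, ← pow_add]
      have : Even (m - 2 + (m - 2)) := ⟨m - 2, rfl⟩
      exact this.neg_one_pow
    have hPab : P (α (m - 1)) * P (α m) < 0 := by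
      have h2 := mul_pos hsa hsb
      nlinarith [h2, hs2]
    have hnp0 : ∀ ρ' ∈ Set.Ioo (α (m - 1)) (α m), ∀ j ∈ Finset.Icc 1 c, ρ' ≠ α j := by
      intro ρ' hρ' j hj
      obtain ⟨hj1, hjc⟩ := Finset.mem_Icc.1 hj
      obtain ⟨hl, hr⟩ := hρ'
      rcases le_or_gt j (m - 1) with h | h
      · have hαj : α j ≤ α (m - 1) := by
          rcases lt_or_eq_of_le h with hlt | heq
          · exact le_of_lt (hmono j hj (m - 1) hm1S hlt)
          · rw [heq]
        intro heq; rw [heq] at hl; linarith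
      · have hαj : α m ≤ α j := by
          rcases lt_or_eq_of_le (show m ≤ j by omega) with hlt | heq
          · exact le_of_lt (hmono m hmS j hj hlt)
          · rw [heq]
        intro heq; rw [heq] at hr; linarith
    have hex : ∃ ρ ∈ Set.Ioo (α (m - 1)) (α m), P ρ = 0 := by
      rcases lt_trichotomy (P (α (m - 1))) 0 with hPa | hPa | hPa
      · have hPb : 0 < P (α m) := by nlinarith
        have h0 : (0 : ℝ) ∈ Set.Ioo (P (α (m - 1))) (P (α m)) := ⟨hPa, hPb⟩
        obtain ⟨ρ, hρI, hρP⟩ := intermediate_value_Ioo hab.le hPcont.continuousOn h0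
        exact ⟨ρ, hρI, hρP⟩
      · rw [hPa, zero_mul] at hPab; exact absurd hPab (lt_irrefl 0)
      · have hPb : P (α m) < 0 := by nlinarith
        have h0 : (0 : ℝ) ∈ Set.Ioo (P (α m)) (P (α (m - 1))) := ⟨hPb, hPa⟩
        obtain ⟨ρ, hρI, hρP⟩ := intermediate_value_Ioo' hab.le hPcont.continuousOn h0
        exact ⟨ρ, hρI, hρP⟩
    obtain ⟨ρ, hρI, hρP⟩ := hex
    refine ⟨ρ, ⟨hρI, (hroot_iff ρ (hnp0 ρ hρI)).2 hρP⟩, ?_⟩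
    rintro ρ' ⟨hρ'I, hρ'g⟩
    have hρg : (∑ k ∈ Finset.Icc 1 c, α k * f k / (α k - ρ)) = 0 :=
      (hroot_iff ρ (hnp0 ρ hρI)).2 hρP
    rcases lt_trichotomy ρ' ρ with h | h | h
    · have := hstrict m hm2 hmc ρ' ρ hρ'I.1 h hρI.2
      rw [hρ'g, hρg] at this; exact absurd this (lt_irrefl 0)
    · exact h
    · have := hstrict m hm2 hmc ρ ρ' hρI.1 h hρ'I.2
      rw [hρ'g, hρg] at this; exact absurd this (lt_irrefl 0)
  · -- part 2: every root off the poles lies in one of the intervals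
    intro ρ hnp hroot
    have h1S : (1 : ℕ) ∈ Finset.Icc 1 c := Finset.mem_Icc.2 ⟨le_refl 1, hc⟩
    have hcS : c ∈ Finset.Icc 1 c := Finset.mem_Icc.2 ⟨hc, le_refl c⟩
    have hb1 : α 1 < ρ := by
      by_contra h
      push_neg at h
      have hlt : ρ < α 1 := lt_of_le_of_ne h (hnp 1 h1S)
      have hsum : 0 < ∑ k ∈ Finset.Icc 1 c, α k * f k / (α k - ρ) := by
        apply Finset.sum_pos _ hSne
        intro k hk
        obtain ⟨hk1, hkc⟩ := Finset.mem_Icc.1 hk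
        have hαk : α 1 ≤ α k := by
          rcases lt_or_eq_of_le hk1 with hltk | heq
          · exact le_of_lt (hmono 1 h1S k hk hltk)
          · rw [← heq]
        exact div_pos (hpos k hk) (by linarith)
      rw [hroot] at hsum; exact lt_irrefl 0 hsum
    have hbc : ρ < α c := by
      by_contra h
      push_neg at h
      have hlt : α c < ρ := lt_of_le_of_ne h (Ne.symm (hnp c hcS))
      have hsum : (∑ k ∈ Finset.Icc 1 c, α k * f k / (α k - ρ)) < 0 := by
        apply Finset.sum_neg _ hSne
        intro k hk
        obtain ⟨hk1, hkc⟩ := Finset.mem_Icc.1 hk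
        have hαk : α k ≤ α c := by
          rcases lt_or_eq_of_le hkc with hltk | heq
          · exact le_of_lt (hmono k hk c hcS hltk)
          · rw [heq]
        exact div_neg_of_pos_of_neg (hpos k hk) (by linarith)
      rw [hroot] at hsum; exact lt_irrefl 0 hsum
    set T := (Finset.Icc 1 c).filter (fun k => ρ < α k) with hT
    have hTne : T.Nonempty := ⟨c, Finset.mem_filter.2 ⟨hcS, hbc⟩⟩
    set m := T.min' hTne with hmdef
    have hmT : m ∈ T := T.min'_mem hTne
    obtain ⟨hmS, hρm⟩ := Finset.mem_filter.1 hmT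
    obtain ⟨hm1, hmc⟩ := Finset.mem_Icc.1 hmS
    have hmne1 : m ≠ 1 := by
      intro h
      rw [h] at hρm
      linarith
    have hm2 : 2 ≤ m := by omega
    have hm1S : m - 1 ∈ Finset.Icc 1 c := Finset.mem_Icc.2 ⟨by omega, by omega⟩
    have hnotT : m - 1 ∉ T := by
      intro h
      have := Finset.min'_le T (m - 1) h
      omega
    have hle : α (m - 1) ≤ ρ := by
      by_contra h
      push_neg at h
      exact hnotT (Finset.mem_filter.2 ⟨hm1S, h⟩)
    have hlt : α (m - 1) < ρ := lt_of_le_of_ne hle (Ne.symm (hnp (m - 1) hm1S))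
    exact ⟨m, Finset.mem_Icc.2 ⟨hm2, hmc⟩, hlt, hρm⟩
end
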